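/- arXiv:2507.17776 — 17 statements merged into one kernel-verified Lean document; each statement's English description precedes it below -/
import Mathlib

section
/- Under the single-relation semantics, the scheme Iφ ∧ I(Iφ ∨ χ) → IRφ is valid on the class of all frames: for every Kripke model (W,R), all sets A, C : W → Prop, and every world s, if (I A) s and (I (fun w => (I A) w ∨ C w)) s, then (IR A) s. -/
/-- Ignorance operator on a Kripke frame: `Ign R A s` holds iff some `R`-successor of `s`
satisfies `A` and some `R`-successor of `s` fails `A`. -/
def Ign {W : Type} (R : W → W → Prop) (A : W → Prop) (s : W) : Prop :=
  (∃ t, R s t ∧ A t) ∧ (∃ u, R s u ∧ ¬ A u)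

/-- Rumsfeld ignorance: `RIgn R Rb A s` holds iff `Ign R A s` and some `Rb`-successor of `s`
fails `Ign R A`. (In the single-relation setting take `Rb = R`.) -/
def RIgn {W : Type} (R Rb : W → W → Prop) (A : W → Prop) (s : W) : Prop :=
  Ign R A s ∧ ∃ t, Rb s t ∧ ¬ Ign R A t

/-- Under the single-relation semantics, the scheme Iφ ∧ I(Iφ ∨ χ) → IRφ is valid on the
class of all frames. -/
theorem mix_valid_single_relation {W : Type} (R : W → W → Prop) (A C : W → Prop) (s : W)
    (hI : Ign R A s) (hII : Ign R (fun w => Ign R A w ∨ C w) s) :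
    RIgn R R A s := by
  obtain ⟨-, u, hu, hnu⟩ := hII
  exact ⟨hI, u, hu, fun h => hnu (Or.inl h)⟩
end

section
/- Under the single-relation semantics, Rumsfeld ignorance is definable in terms of ignorance over the class of all frames: for every Kripke model (W,R), every set A : W → Prop, and every world s, (IR A) s holds if and only if (I A) s holds and, moreover, (I (I A)) s holds or (I (fun w => A w → (I A) w)) s holds. -/
/-- Under the single-relation semantics, Rumsfeld ignorance is definable in terms of
ignorance over the class of all frames:
IRφ ↔ Iφ ∧ (IIφ ∨ I(φ → Iφ)). -/
theorem rumsfeld_definable_single_relation {W : Type} (R : W → W → Prop) (A : W → Prop)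
    (s : W) :
    RIgn R R A s ↔
      Ign R A s ∧ (Ign R (Ign R A) s ∨ Ign R (fun w => A w → Ign R A w) s) := by
  constructor
  · rintro ⟨hI, t, hst, hnt⟩
    refine ⟨hI, ?_⟩
    by_cases hv : ∃ v, R s v ∧ Ign R A v
    · exact Or.inl ⟨hv, t, hst, hnt⟩
    · push_neg at hv
      obtain ⟨⟨t₁, hst₁, hA₁⟩, u, hsu, hAu⟩ := hI
      refine Or.inr ⟨⟨u, hsu, fun h => absurd h hAu⟩, t₁, hst₁, ?_⟩
      intro h
      exact hv t₁ hst₁ (h hA₁)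
  · rintro ⟨hI, hor⟩
    refine ⟨hI, ?_⟩
    rcases hor with ⟨_, t, hst, hnt⟩ | ⟨_, t, hst, hnt⟩
    · exact ⟨t, hst, hnt⟩
    · exact ⟨t, hst, fun h => hnt fun _ => h⟩
end

section
/- On the class of all proper bi-models (those with R ⊆ R∙), the scheme Iφ ∧ I(Iφ ∨ χ) → IRφ is valid: for every bi-model (W,R,R∙) with R ⊆ R∙, all sets A, C : W → Prop, and every world s, if (I A) s and (I (fun w => (I A) w ∨ C w)) s, then (IR A) s. -/
/-- On the class of all proper bi-models (those with R ⊆ R∙), the scheme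
Iφ ∧ I(Iφ ∨ χ) → IRφ is valid. -/
theorem mix_valid_proper {W : Type} (R Rb : W → W → Prop)
    (hsub : ∀ s t, R s t → Rb s t) (A C : W → Prop) (s : W)
    (hI : Ign R A s) (hII : Ign R (fun w => Ign R A w ∨ C w) s) :
    RIgn R Rb A s := by
  obtain ⟨-, u, hu, hnu⟩ := hII
  exact ⟨hI, u, hsub s u hu, fun h => hnu (Or.inl h)⟩
end

section
/- The scheme IRφ → IIφ ∨ I(Iφ ∨ φ) is not valid on the class of proper bi-models: there exist a bi-model (W,R,R∙) with R ⊆ R∙, a set A : W → Prop, and a world s such that (IR A) s holds, but neither (I (I A)) s nor (I (fun w => (I A) w ∨ A w)) s holds. (Hence the rule 'from ψ → Iφ infer IRφ → Iψ ∨ I(ψ ∨ φ)' is not validity-preserving on the class of bi-frames with R ⊆ R∙.) -/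
/-- The scheme IRφ → IIφ ∨ I(Iφ ∨ φ) is not valid on the class of proper bi-models. -/
theorem rmix_not_valid_proper :
    ∃ (W : Type) (R Rb : W → W → Prop) (A : W → Prop) (s : W),
      (∀ s t, R s t → Rb s t) ∧
      RIgn R Rb A s ∧
      ¬ Ign R (Ign R A) s ∧
      ¬ Ign R (fun w => Ign R A w ∨ A w) s := by
  refine ⟨Fin 6, fun a b => (a, b) ∈ [(0,1),(0,2),(1,3),(1,4),(2,3),(2,4)],
    fun a b => (a, b) ∈ [(0,1),(0,2),(1,3),(1,4),(2,3),(2,4),(0,5)],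
    fun w => w = 1 ∨ w = 3, 0, ?_, ?_, ?_, ?_⟩ <;> simp [Ign, RIgn] <;> decide
end

section
/- On the class of all bi-models satisfying R∙ ⊆ R, the rule 'from ψ → Iφ infer IRφ → Iψ ∨ I(ψ ∨ φ)' is validity-preserving: for all IRI-formulas ψ and φ, if ψ → I φ is true at every world of every bi-model with R∙ ⊆ R, then IR φ → (I ψ ∨ I (ψ ∨ φ)) is true at every world of every bi-model with R∙ ⊆ R. -/
/-- The language IRI: φ ::= pᵢ | ¬φ | φ ∧ φ | I φ | IR φ. -/
inductive IRIForm : Type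
  | atom : ℕ → IRIForm
  | neg  : IRIForm → IRIForm
  | and  : IRIForm → IRIForm → IRIForm
  | ign  : IRIForm → IRIForm
  | rign : IRIForm → IRIForm

namespace IRIForm

/-- Classical disjunction. -/
def or (φ ψ : IRIForm) : IRIForm := neg (and (neg φ) (neg ψ))

/-- Classical implication. -/
def imp (φ ψ : IRIForm) : IRIForm := neg (and φ (neg ψ))

/-- Classical biconditional. -/
def iff (φ ψ : IRIForm) : IRIForm := and (imp φ ψ) (imp ψ φ)

/-- A fixed tautology (empty conjunction). -/
def top : IRIForm := imp (atom 0) (atom 0)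

/-- Finite conjunction of a list of formulas. -/
def bigAnd : List IRIForm → IRIForm
  | [] => top
  | [φ] => φ
  | φ :: ψ :: l => and φ (bigAnd (ψ :: l))

/-- `φ` is an instance of a propositional tautology: every Boolean valuation that respects
negation and conjunction (treating all other formulas as atoms) makes `φ` true. -/
def Taut (φ : IRIForm) : Prop :=
  ∀ v : IRIForm → Bool,
    (∀ ψ, v (neg ψ) = !(v ψ)) →
    (∀ ψ χ, v (and ψ χ) = ((v ψ) && (v χ))) →
    v φ = true

end IRIForm

/-- A bi-model: worlds, two accessibility relations, and a valuation. -/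
structure BiModel where
  W : Type
  R : W → W → Prop
  Rb : W → W → Prop
  V : ℕ → W → Prop

/-- A bi-model is proper if R ⊆ R∙. -/
def BiModel.Proper (M : BiModel) : Prop := ∀ s t, M.R s t → M.Rb s t

/-- A relation is serial if every world has a successor. -/
def SerialRel {W : Type} (R : W → W → Prop) : Prop := ∀ s, ∃ t, R s t

/-- Truth of an IRI-formula at a world of a bi-model. -/
def Sat (M : BiModel) : M.W → IRIForm → Prop
  | s, .atom n => M.V n s
  | s, .neg φ => ¬ Sat M s φ
  | s, .and φ ψ => Sat M s φ ∧ Sat M s ψ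
  | s, .ign φ => (∃ t, M.R s t ∧ Sat M t φ) ∧ (∃ u, M.R s u ∧ ¬ Sat M u φ)
  | s, .rign φ =>
      ((∃ t, M.R s t ∧ Sat M t φ) ∧ (∃ u, M.R s u ∧ ¬ Sat M u φ)) ∧
      (∃ t, M.Rb s t ∧
        ¬ ((∃ t', M.R t t' ∧ Sat M t' φ) ∧ (∃ u, M.R t u ∧ ¬ Sat M u φ)))

/-- On the class of all bi-models satisfying R∙ ⊆ R, the rule
'from ψ → Iφ infer IRφ → Iψ ∨ I(ψ ∨ φ)' is validity-preserving. -/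
theorem rmix_rule_validity_preserving (ψ φ : IRIForm)
    (h : ∀ M : BiModel, (∀ s t, M.Rb s t → M.R s t) → ∀ s, Sat M s (IRIForm.imp ψ (IRIForm.ign φ))) :
    ∀ M : BiModel, (∀ s t, M.Rb s t → M.R s t) → ∀ s,
      Sat M s (IRIForm.imp (IRIForm.rign φ)
        (IRIForm.or (IRIForm.ign ψ) (IRIForm.ign (IRIForm.or ψ φ)))) := by
  intro M hsub s
  simp only [IRIForm.imp, IRIForm.or, Sat] at *
  intro ⟨⟨hIφ, ht⟩, hnot⟩
  obtain ⟨t, hRbt, htIφ⟩ := ht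
  have hRt : M.R s t := hsub s t hRbt
  have htψ : ¬ Sat M t ψ := fun hψ => (h M hsub t) ⟨hψ, htIφ⟩
  by_cases hex : ∃ u, M.R s u ∧ Sat M u ψ
  · exact hnot fun ⟨h1, _⟩ => h1 ⟨hex, ⟨t, hRt, htψ⟩⟩
  · push_neg at hex
    refine hnot fun ⟨_, h2⟩ => ?_
    obtain ⟨⟨u, hRu, huφ⟩, v, hRv, hvφ⟩ := hIφ
    exact h2 ⟨⟨u, hRu, fun ⟨_, hn⟩ => hn huφ⟩, v, hRv, fun hv => hv ⟨hex v hRv, hvφ⟩⟩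
end

section
/- The operator IR is not definable in the I-fragment over the class of proper bi-models: there is no formula φ of the language L(I) such that for every bi-model (W,R,R∙,V) with R ⊆ R∙ and every world s, (M,s) ⊨ IR p₀ if and only if (M,s) ⊨ φ (where p₀ is a fixed propositional variable). -/
/-- The language L(I): φ ::= pᵢ | ¬φ | φ ∧ φ | I φ. -/
inductive LIForm : Type
  | atom : ℕ → LIForm
  | neg  : LIForm → LIForm
  | and  : LIForm → LIForm → LIForm
  | ign  : LIForm → LIForm

/-- Truth of an L(I)-formula at a world of a bi-model (only `R` is used). -/
def SatI (M : BiModel) : M.W → LIForm → Prop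
  | s, .atom n => M.V n s
  | s, .neg φ => ¬ SatI M s φ
  | s, .and φ ψ => SatI M s φ ∧ SatI M s ψ
  | s, .ign φ => (∃ t, M.R s t ∧ SatI M t φ) ∧ (∃ u, M.R s u ∧ ¬ SatI M u φ)

/-- Truth of the formula `IR p₀` at a world of a bi-model: `I p₀` holds and some
`R∙`-successor fails `I p₀`. -/
def SatIRp0 (M : BiModel) (s : M.W) : Prop :=
  ((∃ t, M.R s t ∧ M.V 0 t) ∧ (∃ u, M.R s u ∧ ¬ M.V 0 u)) ∧
  (∃ t, M.Rb s t ∧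
    ¬ ((∃ t', M.R t t' ∧ M.V 0 t') ∧ (∃ u, M.R t u ∧ ¬ M.V 0 u)))

/-- IR is not definable in the I-fragment over the class of proper bi-models (R ⊆ R∙):
no L(I)-formula is equivalent to IR p₀ on every proper bi-model. -/
theorem ir_undefinable_proper :
    ¬ ∃ φ : LIForm, ∀ M : BiModel, (∀ s t, M.R s t → M.Rb s t) →
      ∀ s, (SatIRp0 M s ↔ SatI M s φ) := by
  rintro ⟨φ, h⟩
  -- Model 1: worlds Option Bool; `none` is a dead end reachable only via Rb.
  set M1 : BiModel :=
    ⟨Option Bool, fun s t => s.isSome ∧ t.isSome, fun s _ => s.isSome,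
      fun n w => n = 0 ∧ w = some true⟩ with hM1
  -- Model 2: worlds Bool, total relations.
  set M2 : BiModel :=
    ⟨Bool, fun _ _ => True, fun _ _ => True, fun n w => n = 0 ∧ w = true⟩ with hM2
  have bisim : ∀ (ψ : LIForm) (b : Bool), SatI M1 (some b) ψ ↔ SatI M2 b ψ := by
    intro ψ
    induction ψ with
    | atom n => intro b; simp [SatI, hM1, hM2, M1, M2]
    | neg ψ ih => intro b; simp [SatI, ih]
    | and ψ χ ih1 ih2 => intro b; simp [SatI, ih1, ih2]
    | ign ψ ih =>
      intro b
      constructor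
      · rintro ⟨⟨t, ⟨_, ht⟩, hsat⟩, ⟨u, ⟨_, hu⟩, hnsat⟩⟩
        obtain ⟨c, rfl⟩ := Option.isSome_iff_exists.mp ht
        obtain ⟨d, rfl⟩ := Option.isSome_iff_exists.mp hu
        exact ⟨⟨c, trivial, (ih c).mp hsat⟩, ⟨d, trivial, fun hh => hnsat ((ih d).mpr hh)⟩⟩
      · rintro ⟨⟨c, _, hsat⟩, ⟨d, _, hnsat⟩⟩
        exact ⟨⟨some c, ⟨rfl, rfl⟩, (ih c).mpr hsat⟩,
               ⟨some d, ⟨rfl, rfl⟩, fun hh => hnsat ((ih d).mp hh)⟩⟩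
  have h1 := h M1 (fun s t hst => hst.1) (some true)
  have h2 := h M2 (fun _ _ _ => trivial) true
  have sat1 : SatIRp0 M1 (some true) := by
    refine ⟨⟨⟨some true, ⟨rfl, rfl⟩, rfl, rfl⟩,
      ⟨some false, ⟨rfl, rfl⟩, by simp [hM1, M1]⟩⟩, ⟨none, rfl, ?_⟩⟩
    rintro ⟨⟨t', ⟨hns, _⟩, _⟩, _⟩
    simp at hns
  have sat2 : SatI M2 true φ := (bisim φ true).mp (h1.mp sat1)
  have : SatIRp0 M2 true := h2.mpr sat2
  obtain ⟨_, ⟨t, _, hni⟩⟩ := this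
  exact hni ⟨⟨true, trivial, rfl, rfl⟩, ⟨false, trivial, by simp [hM2, M2]⟩⟩
end

section
/- The operator IR is not definable in the I-fragment over the class of bi-models with R∙ ⊆ R: there is no formula φ of the language L(I) such that for every bi-model (W,R,R∙,V) with R∙ ⊆ R and every world s, (M,s) ⊨ IR p₀ if and only if (M,s) ⊨ φ (where p₀ is a fixed propositional variable). -/
lemma satI_ext (W : Type) (R : W → W → Prop) (Rb Rb' : W → W → Prop)
    (V : ℕ → W → Prop) : ∀ (φ : LIForm) (s : W),
    SatI ⟨W, R, Rb, V⟩ s φ ↔ SatI ⟨W, R, Rb', V⟩ s φ := by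
  intro φ
  induction φ with
  | atom n => intro s; simp [SatI]
  | neg ψ ih => intro s; simp [SatI, ih]
  | and ψ χ ih1 ih2 => intro s; simp [SatI, ih1, ih2]
  | ign ψ ih => intro s; simp [SatI, ih]

/-- IR is not definable in the I-fragment over the class of bi-models with R∙ ⊆ R:
no L(I)-formula is equivalent to IR p₀ on every such bi-model. -/
theorem ir_undefinable_bulletsub :
    ¬ ∃ φ : LIForm, ∀ M : BiModel, (∀ s t, M.Rb s t → M.R s t) →
      ∀ s, (SatIRp0 M s ↔ SatI M s φ) := by
  rintro ⟨φ, h⟩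
  set R : Bool → Bool → Prop := fun a _ => a = true with hR
  set V : ℕ → Bool → Prop := fun _ b => b = true with hV
  set M1 : BiModel := ⟨Bool, R, fun a b => a = true ∧ b = false, V⟩ with hM1
  set M2 : BiModel := ⟨Bool, R, fun _ _ => False, V⟩ with hM2
  have h1 := h M1 (by rintro s t ⟨hs, _⟩; exact hs) true
  have h2 := h M2 (by rintro s t ⟨⟩) true
  have s1 : SatIRp0 M1 true := by
    refine ⟨⟨⟨true, rfl, rfl⟩, ⟨false, rfl, fun hf => Bool.false_ne_true hf⟩⟩,
      ⟨false, ⟨rfl, rfl⟩, ?_⟩⟩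
    rintro ⟨⟨t', ht', -⟩, -⟩
    exact Bool.false_ne_true ht'
  have s2 : ¬ SatIRp0 M2 true := by
    rintro ⟨-, t, ht, -⟩
    exact ht
  exact s2 ((h2.mpr) ((satI_ext Bool R _ _ V φ true).mp (h1.mp s1)))
end

section
/- Soundness of IRIK: every formula derivable in the proof system IRIK is valid on the class of all proper bi-models, i.e. if ⊢_IRIK φ then φ is true at every world of every bi-model (W,R,R∙,V) with R ⊆ R∙. -/
open IRIForm in
/-- The minimal proof system IRIK. -/
inductive Prov : IRIForm → Prop
  | taut {φ} : Taut φ → Prov φ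
  | mp {φ ψ} : Prov (imp φ ψ) → Prov φ → Prov ψ
  | iEqu (φ) : Prov (iff (ign φ) (ign (neg φ)))
  | irEqu (φ) : Prov (iff (rign φ) (rign (neg φ)))
  | iCon (φ ψ) : Prov (imp (ign (and φ ψ)) (or (ign φ) (ign ψ)))
  | iDis (φ ψ χ) : Prov (imp (and (ign (or φ ψ)) (ign (or (neg φ) χ))) (ign φ))
  | riI (φ) : Prov (imp (rign φ) (ign φ))
  | mix (φ χ) : Prov (imp (and (ign φ) (ign (or (ign φ) χ))) (rign φ))
  | rNI {φ} : Prov φ → Prov (neg (ign φ))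
  | reI {φ ψ} : Prov (iff φ ψ) → Prov (iff (ign φ) (ign ψ))
  | reRI {φ ψ} : Prov (iff φ ψ) → Prov (iff (rign φ) (rign ψ))
  | rMix {l : List IRIForm} {φ} :
      Prov (imp (bigAnd (l.map ign)) (ign φ)) →
      Prov (imp (bigAnd (l.map fun χ => and (neg (rign χ)) (ign χ))) (neg (rign φ)))

open IRIForm

lemma sat_imp (M : BiModel) (s : M.W) (φ ψ : IRIForm) :
    Sat M s (imp φ ψ) ↔ (Sat M s φ → Sat M s ψ) := by
  simp only [imp, Sat]; tauto

lemma sat_or (M : BiModel) (s : M.W) (φ ψ : IRIForm) :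
    Sat M s (IRIForm.or φ ψ) ↔ (Sat M s φ ∨ Sat M s ψ) := by
  simp only [IRIForm.or, Sat]; tauto

lemma sat_iff (M : BiModel) (s : M.W) (φ ψ : IRIForm) :
    Sat M s (IRIForm.iff φ ψ) ↔ (Sat M s φ ↔ Sat M s ψ) := by
  simp only [IRIForm.iff, Sat, sat_imp]; tauto

lemma sat_bigAnd (M : BiModel) (s : M.W) (L : List IRIForm) :
    Sat M s (bigAnd L) ↔ ∀ ψ ∈ L, Sat M s ψ := by
  induction L with
  | nil =>
    simp only [bigAnd, top, sat_imp, List.not_mem_nil]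
    tauto
  | cons φ l ih =>
    cases l with
    | nil => simp [bigAnd]
    | cons ψ l' =>
      simp only [bigAnd, Sat] at *
      rw [ih]
      simp only [List.mem_cons]
      constructor
      · rintro ⟨h1, h2⟩ χ (rfl | h); · exact h1
        · exact h2 χ h
      · intro h
        exact ⟨h φ (Or.inl rfl), fun χ hχ => h χ (Or.inr hχ)⟩

/-- Soundness of IRIK with respect to the class of all proper bi-models. -/
theorem irik_sound (φ : IRIForm) (h : Prov φ) :
    ∀ M : BiModel, M.Proper → ∀ s, Sat M s φ := by
  induction h with
  | @taut φ ht =>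
    intro M _ s
    classical
    have := ht (fun ψ => decide (Sat M s ψ))
      (fun ψ => by rw [Bool.eq_iff_iff]; simp [Sat]; exact @decide_eq_true_iff _ (Classical.propDecidable _)) (fun ψ χ => by rw [Bool.eq_iff_iff]; simp [Sat]; exact @decide_eq_true_iff _ (Classical.propDecidable _))
    exact of_decide_eq_true this
  | @mp φ ψ _ _ ih1 ih2 =>
    intro M hM s
    exact (sat_imp M s φ ψ).1 (ih1 M hM s) (ih2 M hM s)
  | iEqu φ =>
    intro M _ s
    rw [sat_iff]
    simp only [Sat, not_not]
    tauto
  | irEqu φ =>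
    intro M _ s
    rw [sat_iff]
    have hI : ∀ t : M.W,
        (((∃ t', M.R t t' ∧ Sat M t' φ) ∧ ∃ u, M.R t u ∧ ¬ Sat M u φ) ↔
         ((∃ t', M.R t t' ∧ ¬ Sat M t' φ) ∧ ∃ u, M.R t u ∧ ¬ ¬ Sat M u φ)) := by
      intro t
      constructor
      · rintro ⟨⟨t', h1, h2⟩, ⟨u, h3, h4⟩⟩
        exact ⟨⟨u, h3, h4⟩, ⟨t', h1, not_not_intro h2⟩⟩
      · rintro ⟨⟨t', h1, h2⟩, ⟨u, h3, h4⟩⟩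
        exact ⟨⟨u, h3, not_not.1 h4⟩, ⟨t', h1, h2⟩⟩
    simp only [Sat]
    constructor
    · rintro ⟨h1, ⟨t, h2, h3⟩⟩
      exact ⟨(hI s).1 h1, ⟨t, h2, fun hh => h3 ((hI t).2 hh)⟩⟩
    · rintro ⟨h1, ⟨t, h2, h3⟩⟩
      exact ⟨(hI s).2 h1, ⟨t, h2, fun hh => h3 ((hI t).1 hh)⟩⟩
  | iCon φ ψ =>
    intro M _ s
    rw [sat_imp, sat_or]
    rintro ⟨⟨t, hst, htφ, htψ⟩, ⟨u, hsu, hu⟩⟩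
    simp only [Sat] at hu
    by_cases h : ∃ u', M.R s u' ∧ ¬ Sat M u' φ
    · exact Or.inl ⟨⟨t, hst, htφ⟩, h⟩
    · push_neg at h
      refine Or.inr ⟨⟨t, hst, htψ⟩, ⟨u, hsu, fun huψ => hu ⟨h u hsu, huψ⟩⟩⟩
  | iDis φ ψ χ =>
    intro M _ s
    rw [sat_imp]
    rintro ⟨⟨_, ⟨u1, hsu1, hu1⟩⟩, ⟨_, ⟨u2, hsu2, hu2⟩⟩⟩
    rw [sat_or] at hu1
    rw [sat_or] at hu2
    push_neg at hu1 hu2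
    have h2 : Sat M u2 φ := by
      have := hu2.1
      simp only [Sat, not_not] at this
      exact this
    exact ⟨⟨u2, hsu2, h2⟩, ⟨u1, hsu1, hu1.1⟩⟩
  | riI φ =>
    intro M _ s
    rw [sat_imp]
    exact fun h => h.1
  | mix φ χ =>
    intro M hM s
    rw [sat_imp]
    rintro ⟨h1, ⟨_, ⟨u, hsu, hu⟩⟩⟩
    rw [sat_or] at hu
    push_neg at hu
    have := hu.1
    simp only [Sat] at this h1 ⊢
    exact ⟨h1, u, hM s u hsu, this⟩
  | @rNI φ _ ih =>
    intro M hM s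
    simp only [Sat]
    rintro ⟨-, u, hsu, hu⟩
    exact hu (ih M hM u)
  | @reI φ ψ _ ih =>
    intro M hM s
    rw [sat_iff]
    have h : ∀ t : M.W, Sat M t φ ↔ Sat M t ψ :=
      fun t => (sat_iff M t φ ψ).1 (ih M hM t)
    simp only [Sat]
    constructor
    · rintro ⟨⟨t, hst, ht⟩, ⟨u, hsu, hu⟩⟩
      exact ⟨⟨t, hst, (h t).1 ht⟩, ⟨u, hsu, fun hh => hu ((h u).2 hh)⟩⟩
    · rintro ⟨⟨t, hst, ht⟩, ⟨u, hsu, hu⟩⟩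
      exact ⟨⟨t, hst, (h t).2 ht⟩, ⟨u, hsu, fun hh => hu ((h u).1 hh)⟩⟩
  | @reRI φ ψ _ ih =>
    intro M hM s
    rw [sat_iff]
    have h : ∀ t : M.W, Sat M t φ ↔ Sat M t ψ :=
      fun t => (sat_iff M t φ ψ).1 (ih M hM t)
    have hI : ∀ t : M.W,
        (((∃ t', M.R t t' ∧ Sat M t' φ) ∧ ∃ u, M.R t u ∧ ¬ Sat M u φ) ↔
         ((∃ t', M.R t t' ∧ Sat M t' ψ) ∧ ∃ u, M.R t u ∧ ¬ Sat M u ψ)) := by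
      intro t
      constructor
      · rintro ⟨⟨t', h1, h2⟩, ⟨u, h3, h4⟩⟩
        exact ⟨⟨t', h1, (h t').1 h2⟩, ⟨u, h3, fun hh => h4 ((h u).2 hh)⟩⟩
      · rintro ⟨⟨t', h1, h2⟩, ⟨u, h3, h4⟩⟩
        exact ⟨⟨t', h1, (h t').2 h2⟩, ⟨u, h3, fun hh => h4 ((h u).1 hh)⟩⟩
    simp only [Sat]
    constructor
    · rintro ⟨h1, ⟨t, h2, h3⟩⟩
      exact ⟨(hI s).1 h1, ⟨t, h2, fun hh => h3 ((hI t).2 hh)⟩⟩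
    · rintro ⟨h1, ⟨t, h2, h3⟩⟩
      exact ⟨(hI s).2 h1, ⟨t, h2, fun hh => h3 ((hI t).1 hh)⟩⟩
  | @rMix l φ _ ih =>
    intro M hM s
    rw [sat_imp]
    intro hprem
    rw [sat_bigAnd] at hprem
    simp only [Sat]
    rintro ⟨hIφ, ⟨t, hst, hnIφ⟩⟩
    -- each χ in l has ign χ true at s and at every Rb-successor of s
    have hχt : ∀ χ ∈ l, Sat M t (ign χ) := by
      intro χ hχ
      have := hprem _ (List.mem_map_of_mem hχ)
      simp only [Sat] at this
      obtain ⟨hnr, hiχ⟩ := this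
      by_contra hcon
      simp only [Sat] at hcon
      exact hnr ⟨hiχ, t, hst, hcon⟩
    have hall : Sat M t (bigAnd (l.map ign)) := by
      rw [sat_bigAnd]
      intro ψ hψ
      obtain ⟨χ, hχ, rfl⟩ := List.mem_map.1 hψ
      exact hχt χ hχ
    exact hnIφ ((sat_imp M t _ _).1 (ih M hM t) hall)
end

section
/- IRIK is sound and strongly complete with respect to the class of serial proper bi-models: for every set Γ of IRI-formulas and every IRI-formula φ, φ is a logical consequence of Γ over the class of bi-models with R ⊆ R∙ in which both R and R∙ are serial (every world has an R-successor and an R∙-successor) if and only if there is a finite list γ₁,…,γₖ of members of Γ with ⊢_IRIK (γ₁ ∧ ⋯ ∧ γₖ) → φ. -/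
-- ===================== toolkit =====================
namespace IRIK
open IRIForm

/-- tactic for proving Taut goals after intro; we inline per lemma. -/
lemma pmp1 {a b : IRIForm} (t : Taut (imp a b)) (h : Prov a) : Prov b := Prov.mp (Prov.taut t) h
lemma pmp2 {a b c : IRIForm} (t : Taut (imp a (imp b c))) (h1 : Prov a) (h2 : Prov b) : Prov c :=
  Prov.mp (pmp1 t h1) h2
lemma pmp3 {a b c d : IRIForm} (t : Taut (imp a (imp b (imp c d))))
    (h1 : Prov a) (h2 : Prov b) (h3 : Prov c) : Prov d := Prov.mp (pmp2 t h1 h2) h3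

lemma P_id (a : IRIForm) : Prov (imp a a) := by
  apply Prov.taut; intro v hn ha
  simp only [IRIForm.imp, hn, ha]; cases hx : v a <;> rfl
lemma P_top : Prov top := by
  apply Prov.taut; intro v hn ha
  simp only [IRIForm.imp, IRIForm.top, hn, ha]; cases hx : v (IRIForm.atom 0) <;> rfl
lemma P_imp_of {b : IRIForm} (h : Prov b) (a : IRIForm) : Prov (imp a b) := by
  refine pmp1 ?_ h; intro v hn ha
  simp only [IRIForm.imp, hn, ha]; cases hx : v a <;> cases hy : v b <;> rfl
lemma P_imp_trans {a b c : IRIForm} (h1 : Prov (imp a b)) (h2 : Prov (imp b c)) :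
    Prov (imp a c) := by
  refine pmp2 ?_ h1 h2; intro v hn ha
  simp only [IRIForm.imp, hn, ha]; cases hx : v a <;> cases hy : v b <;> cases hz : v c <;> rfl
lemma P_and_left (a b : IRIForm) : Prov (imp (and a b) a) := by
  apply Prov.taut; intro v hn ha
  simp only [IRIForm.imp, hn, ha]; cases hx : v a <;> cases hy : v b <;> rfl
lemma P_and_right (a b : IRIForm) : Prov (imp (and a b) b) := by
  apply Prov.taut; intro v hn ha
  simp only [IRIForm.imp, hn, ha]; cases hx : v a <;> cases hy : v b <;> rfl
lemma P_and_intro {c a b : IRIForm} (h1 : Prov (imp c a)) (h2 : Prov (imp c b)) :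
    Prov (imp c (and a b)) := by
  refine pmp2 ?_ h1 h2; intro v hn ha
  simp only [IRIForm.imp, hn, ha]; cases hx : v a <;> cases hy : v b <;> cases hz : v c <;> rfl
lemma P_iff_mp {a b : IRIForm} (h : Prov (iff a b)) : Prov (imp a b) := by
  refine pmp1 ?_ h; intro v hn ha
  simp only [IRIForm.imp, IRIForm.iff, hn, ha]; cases hx : v a <;> cases hy : v b <;> rfl
lemma P_iff_mpr {a b : IRIForm} (h : Prov (iff a b)) : Prov (imp b a) := by
  refine pmp1 ?_ h; intro v hn ha
  simp only [IRIForm.imp, IRIForm.iff, hn, ha]; cases hx : v a <;> cases hy : v b <;> rfl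

lemma prov_bigAnd_mem : ∀ (l : List IRIForm) (γ : IRIForm), γ ∈ l → Prov (imp (bigAnd l) γ)
  | [], γ, h => by simp at h
  | [a], γ, h => by
      simp only [List.mem_singleton] at h; subst h; exact P_id _
  | a :: b :: t, γ, h => by
      rcases List.mem_cons.1 h with h | h
      · subst h; exact P_and_left _ _
      · exact P_imp_trans (P_and_right a (bigAnd (b :: t))) (prov_bigAnd_mem (b :: t) γ h)

lemma prov_imp_bigAnd : ∀ (l : List IRIForm) {ψ : IRIForm},
    (∀ γ ∈ l, Prov (imp ψ γ)) → Prov (imp ψ (bigAnd l))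
  | [], ψ, _ => P_imp_of P_top ψ
  | [a], ψ, h => h a (by simp)
  | a :: b :: t, ψ, h => by
      exact P_and_intro (h a (by simp)) (prov_imp_bigAnd (b :: t)
        (fun γ hg => h γ (List.mem_cons_of_mem _ hg)))

end IRIK

namespace IRIK
open IRIForm

def Consistent (S : Set IRIForm) : Prop :=
  ∀ l : List IRIForm, (∀ γ ∈ l, γ ∈ S) → ¬ Prov (neg (bigAnd l))

def MCS (S : Set IRIForm) : Prop :=
  Consistent S ∧ ∀ φ, φ ∉ S → ¬ Consistent (insert φ S)

lemma not_consistent_iff {S : Set IRIForm} :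
    ¬ Consistent S ↔ ∃ l : List IRIForm, (∀ γ ∈ l, γ ∈ S) ∧ Prov (neg (bigAnd l)) := by
  unfold Consistent; push_neg; rfl

/-- Split a list included in `insert x A` into the `x`-part and an `A`-part. -/
lemma exists_sublist {x : IRIForm} {A : Set IRIForm} :
    ∀ (l : List IRIForm), (∀ γ ∈ l, γ ∈ insert x A) →
      ∃ l'' : List IRIForm, (∀ γ ∈ l'', γ ∈ A) ∧ ∀ γ ∈ l, γ = x ∨ γ ∈ l''
  | [], _ => ⟨[], by simp, by simp⟩
  | a :: t, h => by
      obtain ⟨l'', h1, h2⟩ := exists_sublist t (fun γ hg => h γ (List.mem_cons_of_mem _ hg))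
      rcases h a (List.mem_cons_self) with ha | ha
      · exact ⟨l'', h1, by
          intro γ hg
          rcases List.mem_cons.1 hg with rfl | hg
          · exact Or.inl ha
          · exact h2 γ hg⟩
      · refine ⟨a :: l'', ?_, ?_⟩
        · intro γ hg; rcases List.mem_cons.1 hg with rfl | hg
          · exact ha
          · exact h1 γ hg
        · intro γ hg; rcases List.mem_cons.1 hg with rfl | hg
          · exact Or.inr (List.mem_cons_self)
          · rcases h2 γ hg with h' | h'
            · exact Or.inl h'
            · exact Or.inr (List.mem_cons_of_mem _ h')

lemma imp_neg_of_incons {x : IRIForm} {l l'' : List IRIForm}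
    (hp : Prov (neg (bigAnd l)))
    (hA : Prov (imp (and x (bigAnd l'')) (bigAnd l))) :
    Prov (imp (bigAnd l'') (neg x)) := by
  refine pmp2 ?_ hp hA
  intro v hn ha
  simp only [IRIForm.imp, hn, ha]
  cases h1 : v x <;> cases h2 : v (bigAnd l'') <;> cases h3 : v (bigAnd l) <;> rfl

lemma neg_of_imp_both {D a : IRIForm} (h1 : Prov (imp D a)) (h2 : Prov (imp D (neg a))) :
    Prov (neg D) := by
  refine pmp2 ?_ h1 h2
  intro v hn ha
  simp only [IRIForm.imp, hn, ha]
  cases hx : v D <;> cases hy : v a <;> rfl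

/-- The canonical implication from `insert x A`-inclusion. -/
lemma imp_list_of_split {x : IRIForm} {l l'' : List IRIForm}
    (hmem : ∀ γ ∈ l, γ = x ∨ γ ∈ l'') :
    Prov (imp (and x (bigAnd l'')) (bigAnd l)) := by
  apply prov_imp_bigAnd
  intro γ hg
  rcases hmem γ hg with rfl | hg'
  · exact P_and_left _ _
  · exact P_imp_trans (P_and_right _ _) (prov_bigAnd_mem _ _ hg')

lemma prov_bigAnd_append_left (l l'' : List IRIForm) :
    Prov (imp (bigAnd (l ++ l'')) (bigAnd l)) :=
  prov_imp_bigAnd _ (fun γ hg => prov_bigAnd_mem _ _ (List.mem_append_left _ hg))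

lemma prov_bigAnd_append_right (l l'' : List IRIForm) :
    Prov (imp (bigAnd (l ++ l'')) (bigAnd l'')) :=
  prov_imp_bigAnd _ (fun γ hg => prov_bigAnd_mem _ _ (List.mem_append_right _ hg))

lemma mcs_closed {S : Set IRIForm} (hs : MCS S) {l : List IRIForm} {φ : IRIForm}
    (hl : ∀ γ ∈ l, γ ∈ S) (hp : Prov (imp (bigAnd l) φ)) : φ ∈ S := by
  by_contra hφ
  obtain ⟨l', hl', hp'⟩ := not_consistent_iff.1 (hs.2 φ hφ)
  obtain ⟨l'', hsub, hmem⟩ := exists_sublist l' hl'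
  have hneg : Prov (imp (bigAnd l'') (neg φ)) := imp_neg_of_incons hp' (imp_list_of_split hmem)
  have h1 : Prov (imp (bigAnd (l ++ l'')) φ) := P_imp_trans (prov_bigAnd_append_left l l'') hp
  have h2 : Prov (imp (bigAnd (l ++ l'')) (neg φ)) :=
    P_imp_trans (prov_bigAnd_append_right l l'') hneg
  refine hs.1 (l ++ l'') ?_ (neg_of_imp_both h1 h2)
  intro γ hg
  rcases List.mem_append.1 hg with hg | hg
  · exact hl γ hg
  · exact hsub γ hg

lemma mcs_mem_of_prov {S : Set IRIForm} (hs : MCS S) {φ : IRIForm} (hp : Prov φ) : φ ∈ S :=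
  mcs_closed hs (l := []) (by simp) (P_imp_of hp _)

lemma mcs_not_both {S : Set IRIForm} (hs : MCS S) {φ : IRIForm}
    (h1 : φ ∈ S) (h2 : neg φ ∈ S) : False := by
  refine hs.1 [φ, neg φ] ?_ ?_
  · intro γ hg; rcases List.mem_cons.1 hg with rfl | hg
    · exact h1
    · simp only [List.mem_singleton] at hg; subst hg; exact h2
  · apply Prov.taut; intro v hn ha
    show v (neg (bigAnd [φ, neg φ])) = true
    simp only [IRIForm.bigAnd, hn, ha]
    cases hx : v φ <;> rfl

lemma mcs_neg_mem {S : Set IRIForm} (hs : MCS S) {φ : IRIForm} (hφ : φ ∉ S) : neg φ ∈ S := by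
  obtain ⟨l', hl', hp'⟩ := not_consistent_iff.1 (hs.2 φ hφ)
  obtain ⟨l'', hsub, hmem⟩ := exists_sublist l' hl'
  exact mcs_closed hs hsub (imp_neg_of_incons hp' (imp_list_of_split hmem))

lemma mcs_neg_iff {S : Set IRIForm} (hs : MCS S) {φ : IRIForm} : neg φ ∈ S ↔ φ ∉ S :=
  ⟨fun h2 h1 => mcs_not_both hs h1 h2, mcs_neg_mem hs⟩

lemma mcs_mem_of_not_neg {S : Set IRIForm} (hs : MCS S) {φ : IRIForm}
    (h : neg φ ∉ S) : φ ∈ S := by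
  by_contra h'; exact h (mcs_neg_mem hs h')

lemma mcs_and_iff {S : Set IRIForm} (hs : MCS S) {φ ψ : IRIForm} :
    and φ ψ ∈ S ↔ φ ∈ S ∧ ψ ∈ S := by
  constructor
  · intro h
    constructor
    · exact mcs_closed hs (l := [and φ ψ]) (by simpa using h) (P_and_left _ _)
    · exact mcs_closed hs (l := [and φ ψ]) (by simpa using h) (P_and_right _ _)
  · rintro ⟨h1, h2⟩
    refine mcs_closed hs (l := [φ, ψ]) ?_ (P_id _)
    intro γ hg; rcases List.mem_cons.1 hg with rfl | hg
    · exact h1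
    · simp only [List.mem_singleton] at hg; subst hg; exact h2

/-- finite lists inside a chain union live in one member -/
lemma list_in_chain {c : Set (Set IRIForm)} (hc : IsChain (· ⊆ ·) c) (hne : c.Nonempty) :
    ∀ (l : List IRIForm), (∀ γ ∈ l, γ ∈ ⋃₀ c) → ∃ T ∈ c, ∀ γ ∈ l, γ ∈ T
  | [], _ => ⟨hne.choose, hne.choose_spec, by simp⟩
  | a :: t, h => by
      obtain ⟨T1, hT1, hT1'⟩ := list_in_chain hc hne t (fun γ hg => h γ (List.mem_cons_of_mem _ hg))
      obtain ⟨T2, hT2, haT2⟩ := h a (List.mem_cons_self)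
      obtain ⟨T3, hT3, h13, h23⟩ := hc.directedOn T1 hT1 T2 hT2
      refine ⟨T3, hT3, ?_⟩
      intro γ hg; rcases List.mem_cons.1 hg with rfl | hg
      · exact h23 haT2
      · exact h13 (hT1' γ hg)

lemma lindenbaum {S : Set IRIForm} (h : Consistent S) : ∃ T, S ⊆ T ∧ MCS T := by
  obtain ⟨T, hST, hmax⟩ := zorn_subset_nonempty {U : Set IRIForm | Consistent U}
    (fun c hc hchain hne => by
      refine ⟨⋃₀ c, ?_, fun U hU => Set.subset_sUnion_of_mem hU⟩
      intro l hl hp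
      obtain ⟨U, hUc, hlU⟩ := list_in_chain hchain hne l hl
      exact hc hUc l hlU hp) S h
  refine ⟨T, hST, hmax.prop, ?_⟩
  intro φ hφ hcons
  have heq : insert φ T = T := hmax.eq_of_ge (y := insert φ T) hcons (Set.subset_insert _ _)
  exact hφ (heq ▸ Set.mem_insert φ T)
end IRIK

namespace IRIK
open IRIForm

/-! ### The canonical model -/

def Bset (S : Set IRIForm) : Set IRIForm := {φ | ∀ ψ, neg (ign (or φ ψ)) ∈ S}

def Dset (S : Set IRIForm) : Set IRIForm :=
  {θ | ∃ χ, θ = ign χ ∧ neg (rign χ) ∈ S ∧ ign χ ∈ S}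

lemma T_glue_con (x y c d : IRIForm) :
    Taut (imp (iff x y) (imp (imp y (or c d)) (imp (and (neg c) (neg d)) (neg x)))) := by
  intro v hn ha
  simp only [IRIForm.or, IRIForm.imp, IRIForm.iff, hn, ha]
  cases h1 : v x <;> cases h2 : v y <;> cases h3 : v c <;> cases h4 : v d <;> rfl

lemma T_glue_mix (a b c : IRIForm) :
    Taut (imp (imp (and a b) c) (imp (and (neg c) a) (neg b))) := by
  intro v hn ha
  simp only [IRIForm.imp, hn, ha]
  cases h1 : v a <;> cases h2 : v b <;> cases h3 : v c <;> rfl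

lemma P_neg_imp_of_iff {a b : IRIForm} (h : Prov (iff a b)) : Prov (imp (neg a) (neg b)) := by
  refine pmp1 ?_ h; intro v hn ha
  simp only [IRIForm.imp, IRIForm.iff, hn, ha]
  cases hx : v a <;> cases hy : v b <;> rfl

lemma top_mem_Bset {S : Set IRIForm} (hs : MCS S) : top ∈ Bset S := by
  intro ψ
  refine mcs_mem_of_prov hs (Prov.rNI ?_)
  apply Prov.taut; intro v hn ha
  simp only [IRIForm.or, IRIForm.imp, IRIForm.top, hn, ha]
  cases hx : v (IRIForm.atom 0) <;> cases hy : v ψ <;> rfl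

lemma and_mem_Bset {S : Set IRIForm} (hs : MCS S) {a b : IRIForm}
    (hA : a ∈ Bset S) (hB : b ∈ Bset S) : and a b ∈ Bset S := by
  intro ψ
  have e1 : Prov (iff (or (and a b) ψ) (and (or a ψ) (or b ψ))) := by
    apply Prov.taut; intro v hn ha
    simp only [IRIForm.or, IRIForm.imp, IRIForm.iff, hn, ha]
    cases hx : v a <;> cases hy : v b <;> cases hz : v ψ <;> rfl
  have e2 := Prov.reI e1
  have e3 := Prov.iCon (or a ψ) (or b ψ)
  have glue : Prov (imp (and (neg (ign (or a ψ))) (neg (ign (or b ψ))))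
      (neg (ign (or (and a b) ψ)))) := pmp2 (T_glue_con _ _ _ _) e2 e3
  refine mcs_closed hs (l := [neg (ign (or a ψ)), neg (ign (or b ψ))]) ?_ glue
  intro γ hg; rcases List.mem_cons.1 hg with rfl | hg
  · exact hA ψ
  · simp only [List.mem_singleton] at hg; subst hg; exact hB ψ

lemma bigAnd_mem_Bset {S : Set IRIForm} (hs : MCS S) :
    ∀ (l : List IRIForm), (∀ γ ∈ l, γ ∈ Bset S) → bigAnd l ∈ Bset S
  | [], _ => top_mem_Bset hs
  | [a], h => h a (by simp)
  | a :: b :: t, h => by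
      exact and_mem_Bset hs (h a (by simp))
        (bigAnd_mem_Bset hs (b :: t) (fun γ hg => h γ (List.mem_cons_of_mem _ hg)))

/-- Key lemma: if `Iφ ∈ S` then no conjunction of `Bset S` elements provably implies `φ`. -/
lemma key_Bset {S : Set IRIForm} (hs : MCS S) {φ : IRIForm} (hφ : ign φ ∈ S)
    {l : List IRIForm} (hl : ∀ γ ∈ l, γ ∈ Bset S) (hp : Prov (imp (bigAnd l) φ)) : False := by
  set χ := bigAnd l with hχ
  have hχB : χ ∈ Bset S := bigAnd_mem_Bset hs l hl
  have e1 : Prov (iff (or χ φ) φ) := by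
    refine pmp1 ?_ hp
    intro v hn ha
    simp only [IRIForm.or, IRIForm.imp, IRIForm.iff, hn, ha]
    cases hx : v χ <;> cases hy : v φ <;> rfl
  have e2 : Prov (imp (neg (ign (or χ φ))) (neg (ign φ))) := P_neg_imp_of_iff (Prov.reI e1)
  have hmem : neg (ign (or χ φ)) ∈ S := hχB φ
  have : neg (ign φ) ∈ S :=
    mcs_closed hs (l := [neg (ign (or χ φ))]) (by simpa using hmem) e2
  exact mcs_not_both hs hφ this

lemma imp_pos_of_incons {x : IRIForm} {l l'' : List IRIForm}
    (hp : Prov (neg (bigAnd l)))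
    (hA : Prov (imp (and (neg x) (bigAnd l'')) (bigAnd l))) :
    Prov (imp (bigAnd l'') x) := by
  refine pmp2 ?_ hp hA
  intro v hn ha
  simp only [IRIForm.imp, hn, ha]
  cases h1 : v x <;> cases h2 : v (bigAnd l'') <;> cases h3 : v (bigAnd l) <;> rfl

lemma cons_Bset_neg {S : Set IRIForm} (hs : MCS S) {φ : IRIForm} (hφ : ign φ ∈ S) :
    Consistent (insert (neg φ) (Bset S)) := by
  intro l hl hp
  obtain ⟨l'', hsub, hmem⟩ := exists_sublist l hl
  exact key_Bset hs hφ hsub (imp_pos_of_incons hp (imp_list_of_split hmem))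

lemma cons_Bset_pos {S : Set IRIForm} (hs : MCS S) {φ : IRIForm} (hφ : ign φ ∈ S) :
    Consistent (insert φ (Bset S)) := by
  have hφ' : ign (neg φ) ∈ S :=
    mcs_closed hs (l := [ign φ]) (by simpa using hφ) (P_iff_mp (Prov.iEqu φ))
  intro l hl hp
  obtain ⟨l'', hsub, hmem⟩ := exists_sublist l hl
  exact key_Bset hs hφ' hsub (imp_neg_of_incons hp (imp_list_of_split hmem))

lemma exists_map_ign {P : IRIForm → Prop} :
    ∀ (l : List IRIForm), (∀ γ ∈ l, ∃ χ, γ = ign χ ∧ P χ) →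
      ∃ cs : List IRIForm, l = cs.map ign ∧ ∀ χ ∈ cs, P χ
  | [], _ => ⟨[], rfl, by simp⟩
  | a :: t, h => by
      obtain ⟨cs, hcs, hP⟩ := exists_map_ign t (fun γ hg => h γ (List.mem_cons_of_mem _ hg))
      obtain ⟨χ, rfl, hPχ⟩ := h a (List.mem_cons_self)
      refine ⟨χ :: cs, by simp [hcs], ?_⟩
      intro χ' hχ'; rcases List.mem_cons.1 hχ' with rfl | hχ'
      · exact hPχ
      · exact hP χ' hχ'

lemma cons_Dset {S : Set IRIForm} (hs : MCS S) {φ : IRIForm} (hφ : rign φ ∈ S) :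
    Consistent (insert (neg (ign φ)) (Dset S)) := by
  intro l hl hp
  obtain ⟨l'', hsub, hmem⟩ := exists_sublist l hl
  obtain ⟨cs, rfl, hcs⟩ := exists_map_ign l'' hsub
  have hIp : Prov (imp (bigAnd (cs.map ign)) (ign φ)) :=
    imp_pos_of_incons hp (imp_list_of_split hmem)
  have hR := Prov.rMix hIp
  have : neg (rign φ) ∈ S := by
    refine mcs_closed hs (l := cs.map fun χ => and (neg (rign χ)) (ign χ)) ?_ hR
    intro γ hg
    obtain ⟨χ, hχ, rfl⟩ := List.mem_map.1 hg
    exact (mcs_and_iff hs).2 ⟨(hcs χ hχ).1, (hcs χ hχ).2⟩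
  exact mcs_not_both hs hφ this

lemma ign_mem_Bset {S : Set IRIForm} (hs : MCS S) {χ : IRIForm}
    (h1 : neg (rign χ) ∈ S) (h2 : ign χ ∈ S) : ign χ ∈ Bset S := by
  intro ψ
  have hm := Prov.mix χ ψ
  have glue : Prov (imp (and (neg (rign χ)) (ign χ)) (neg (ign (or (ign χ) ψ)))) :=
    pmp1 (T_glue_mix _ _ _) hm
  refine mcs_closed hs (l := [neg (rign χ), ign χ]) ?_ glue
  intro γ hg; rcases List.mem_cons.1 hg with rfl | hg
  · exact h1
  · simp only [List.mem_singleton] at hg; subst hg; exact h2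

def CWorld : Type := {S : Set IRIForm // MCS S}

def canonical : BiModel where
  W := CWorld
  R s t := Bset s.1 ⊆ t.1
  Rb s t := ∀ χ, neg (rign χ) ∈ s.1 → ign χ ∈ s.1 → ign χ ∈ t.1
  V n s := IRIForm.atom n ∈ s.1

lemma canonical_proper : canonical.Proper := by
  intro s t hR χ h1 h2
  exact hR (ign_mem_Bset s.2 h1 h2)

end IRIK

namespace IRIK
open IRIForm

lemma sat_ign_iff {M : BiModel} {s : M.W} {φ : IRIForm} :
    Sat M s (ign φ) ↔ (∃ t, M.R s t ∧ Sat M t φ) ∧ (∃ u, M.R s u ∧ ¬ Sat M u φ) := Iff.rfl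

lemma sat_rign_iff {M : BiModel} {s : M.W} {φ : IRIForm} :
    Sat M s (rign φ) ↔ Sat M s (ign φ) ∧ ∃ t, M.Rb s t ∧ ¬ Sat M t (ign φ) := Iff.rfl

lemma canonical_R_iff {s t : CWorld} : canonical.R s t ↔ Bset s.1 ⊆ t.1 := Iff.rfl
lemma canonical_Rb_iff {s t : CWorld} :
    canonical.Rb s t ↔ ∀ χ, neg (rign χ) ∈ s.1 → ign χ ∈ s.1 → ign χ ∈ t.1 := Iff.rfl

lemma ign_truth {φ : IRIForm} (IH : ∀ w : CWorld, φ ∈ w.1 ↔ Sat canonical w φ) :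
    ∀ s : CWorld, ign φ ∈ s.1 ↔ Sat canonical s (ign φ) := by
  intro s
  rw [sat_ign_iff (M := canonical) (s := s)]
  constructor
  · intro h
    obtain ⟨T, hT1, hT2⟩ := lindenbaum (cons_Bset_pos s.2 h)
    obtain ⟨U, hU1, hU2⟩ := lindenbaum (cons_Bset_neg s.2 h)
    refine ⟨⟨⟨T, hT2⟩, ?_, ?_⟩, ⟨⟨U, hU2⟩, ?_, ?_⟩⟩
    · exact fun γ hγ => hT1 (Set.mem_insert_of_mem _ hγ)
    · exact (IH ⟨T, hT2⟩).1 (hT1 (Set.mem_insert _ _))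
    · exact fun γ hγ => hU1 (Set.mem_insert_of_mem _ hγ)
    · intro hsat
      exact mcs_not_both hU2 ((IH ⟨U, hU2⟩).2 hsat) (hU1 (Set.mem_insert _ _))
  · rintro ⟨⟨t, hRt, hSt⟩, ⟨u, hRu, hSu⟩⟩
    by_contra h
    have claim : (∀ ψ, neg (ign (or φ ψ)) ∈ s.1) ∨ (∀ ψ, neg (ign (or (neg φ) ψ)) ∈ s.1) := by
      by_contra hc
      push_neg at hc
      obtain ⟨⟨ψ1, h1⟩, ⟨ψ2, h2⟩⟩ := hc
      have g1 : ign (or φ ψ1) ∈ s.1 := mcs_mem_of_not_neg s.2 h1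
      have g2 : ign (or (neg φ) ψ2) ∈ s.1 := mcs_mem_of_not_neg s.2 h2
      refine h (mcs_closed s.2 (l := [ign (or φ ψ1), ign (or (neg φ) ψ2)]) ?_ (Prov.iDis φ ψ1 ψ2))
      intro γ hg; rcases List.mem_cons.1 hg with rfl | hg
      · exact g1
      · simp only [List.mem_singleton] at hg; subst hg; exact g2
    rcases claim with hB | hB
    · exact hSu ((IH u).1 (hRu hB))
    · exact ((mcs_neg_iff t.2).1 (hRt hB)) ((IH t).2 hSt)

lemma truth_lemma : ∀ (φ : IRIForm) (s : CWorld), φ ∈ s.1 ↔ Sat canonical s φ := by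
  intro φ
  induction φ with
  | atom n => exact fun s => Iff.rfl
  | neg φ ih =>
      intro s
      rw [show Sat canonical s (IRIForm.neg φ) ↔ ¬ Sat canonical s φ from Iff.rfl, ← ih s]
      exact mcs_neg_iff s.2
  | and φ ψ ihφ ihψ =>
      intro s
      rw [show Sat canonical s (IRIForm.and φ ψ) ↔
        Sat canonical s φ ∧ Sat canonical s ψ from Iff.rfl, ← ihφ s, ← ihψ s]
      exact mcs_and_iff s.2
  | ign φ ih => exact ign_truth ih
  | rign φ ih =>
      intro s
      rw [sat_rign_iff (M := canonical) (s := s)]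
      constructor
      · intro h
        have hI : ign φ ∈ s.1 := mcs_closed s.2 (l := [rign φ]) (by simpa using h) (Prov.riI φ)
        refine ⟨(ign_truth ih s).1 hI, ?_⟩
        obtain ⟨T, hT1, hT2⟩ := lindenbaum (cons_Dset s.2 h)
        refine ⟨⟨T, hT2⟩, ?_, ?_⟩
        · intro χ h1 h2
          exact hT1 (Set.mem_insert_of_mem _ ⟨χ, rfl, h1, h2⟩)
        · intro hsat
          exact mcs_not_both hT2 ((ign_truth ih ⟨T, hT2⟩).2 hsat) (hT1 (Set.mem_insert _ _))
      · rintro ⟨hI, t, hRb, hnt⟩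
        have hIs : ign φ ∈ s.1 := (ign_truth ih s).2 hI
        by_contra h
        exact hnt ((ign_truth ih t).1 (hRb φ (mcs_neg_mem s.2 h) hIs))

end IRIK

namespace IRIK
open IRIForm

/-! ### Making a proper model serial without changing truth -/

open Classical in
noncomputable def rbW (M : BiModel) (w : M.W) : M.W :=
  if h : ∃ t, M.Rb w t then h.choose else w

noncomputable def serialize (M : BiModel) : BiModel where
  W := M.W
  R w x := M.R w x ∨ (¬ (∃ t, M.R w t) ∧ x = rbW M w)
  Rb w x := M.Rb w x ∨ (¬ (∃ t, M.Rb w t) ∧ x = w)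
  V := M.V

lemma serialize_proper {M : BiModel} (hP : M.Proper) : (serialize M).Proper := by
  rintro s t (h | ⟨hnd, rfl⟩)
  · exact Or.inl (hP s t h)
  · unfold rbW
    by_cases h2 : ∃ t, M.Rb s t
    · erw [dif_pos h2]; exact Or.inl h2.choose_spec
    · erw [dif_neg h2]; exact Or.inr ⟨h2, rfl⟩

lemma serialize_serialR (M : BiModel) : SerialRel (serialize M).R := by
  intro s
  by_cases h : ∃ t, M.R s t
  · exact ⟨h.choose, Or.inl h.choose_spec⟩
  · exact ⟨rbW M s, Or.inr ⟨h, rfl⟩⟩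

lemma serialize_serialRb (M : BiModel) : SerialRel (serialize M).Rb := by
  intro s
  by_cases h : ∃ t, M.Rb s t
  · exact ⟨h.choose, Or.inl h.choose_spec⟩
  · exact ⟨s, Or.inr ⟨h, rfl⟩⟩

lemma serialize_R_dead {M : BiModel} {w x : M.W} (hnd : ¬ ∃ t, M.R w t) :
    (serialize M).R w x ↔ x = rbW M w := by
  constructor
  · rintro (h | ⟨_, rfl⟩)
    · exact absurd ⟨x, h⟩ hnd
    · rfl
  · rintro rfl; exact Or.inr ⟨hnd, rfl⟩

lemma serialize_R_live {M : BiModel} {w x : M.W} (hd : ∃ t, M.R w t) :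
    (serialize M).R w x ↔ M.R w x := by
  constructor
  · rintro (h | ⟨hnd, _⟩)
    · exact h
    · exact absurd hd hnd
  · exact Or.inl

lemma serialize_Rb_live {M : BiModel} (hP : M.Proper) {w x : M.W} (hd : ∃ t, M.R w t) :
    (serialize M).Rb w x ↔ M.Rb w x := by
  constructor
  · rintro (h | ⟨hnd, _⟩)
    · exact h
    · exact absurd ⟨hd.choose, hP w _ hd.choose_spec⟩ hnd
  · exact Or.inl

lemma serialize_sat_ign_dead {M : BiModel} {w : M.W} (hnd : ¬ ∃ t, M.R w t) (φ : IRIForm) :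
    ¬ Sat (serialize M) w (ign φ) := by
  rw [sat_ign_iff (M := serialize M) (s := w)]
  rintro ⟨⟨t, ht, hst⟩, ⟨u, hu, hsu⟩⟩
  rw [serialize_R_dead (M := M) (w := w) (x := t) hnd] at ht; rw [serialize_R_dead (M := M) (w := w) (x := u) hnd] at hu
  subst ht; subst hu
  exact hsu hst

lemma sat_ign_dead {M : BiModel} {w : M.W} (hnd : ¬ ∃ t, M.R w t) (φ : IRIForm) :
    ¬ Sat M w (ign φ) := by
  rw [sat_ign_iff]
  rintro ⟨⟨t, ht, _⟩, -⟩
  exact hnd ⟨t, ht⟩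

lemma serialize_sat {M : BiModel} (hP : M.Proper) :
    ∀ (φ : IRIForm) (w : M.W), Sat (serialize M) w φ ↔ Sat M w φ := by
  intro φ
  induction φ with
  | atom n => exact fun w => Iff.rfl
  | neg φ ih => exact fun w => not_congr (ih w)
  | and φ ψ ihφ ihψ => exact fun w => and_congr (ihφ w) (ihψ w)
  | ign φ ih =>
      intro w
      by_cases hd : ∃ t, M.R w t
      · rw [sat_ign_iff (M := serialize M) (s := w), sat_ign_iff]
        constructor
        · rintro ⟨⟨t, ht, hst⟩, ⟨u, hu, hsu⟩⟩
          exact ⟨⟨t, (serialize_R_live hd).1 ht, (ih t).1 hst⟩,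
            ⟨u, (serialize_R_live hd).1 hu, fun h => hsu ((ih u).2 h)⟩⟩
        · rintro ⟨⟨t, ht, hst⟩, ⟨u, hu, hsu⟩⟩
          exact ⟨⟨t, (serialize_R_live hd).2 ht, (ih t).2 hst⟩,
            ⟨u, (serialize_R_live hd).2 hu, fun h => hsu ((ih u).1 h)⟩⟩
      · constructor
        · intro h; exact absurd h (serialize_sat_ign_dead hd φ)
        · intro h; exact absurd h (sat_ign_dead hd φ)
  | rign φ ih =>
      intro w
      have key : ∀ x : M.W, Sat (serialize M) x (ign φ) ↔ Sat M x (ign φ) := by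
        intro x
        by_cases hd : ∃ t, M.R x t
        · rw [sat_ign_iff (M := serialize M) (s := x), sat_ign_iff]
          constructor
          · rintro ⟨⟨t, ht, hst⟩, ⟨u, hu, hsu⟩⟩
            exact ⟨⟨t, (serialize_R_live hd).1 ht, (ih t).1 hst⟩,
              ⟨u, (serialize_R_live hd).1 hu, fun h => hsu ((ih u).2 h)⟩⟩
          · rintro ⟨⟨t, ht, hst⟩, ⟨u, hu, hsu⟩⟩
            exact ⟨⟨t, (serialize_R_live hd).2 ht, (ih t).2 hst⟩,
              ⟨u, (serialize_R_live hd).2 hu, fun h => hsu ((ih u).1 h)⟩⟩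
        · exact iff_of_false (serialize_sat_ign_dead hd φ) (sat_ign_dead hd φ)
      rw [sat_rign_iff (M := serialize M) (s := w), sat_rign_iff]
      by_cases hd : ∃ t, M.R w t
      · constructor
        · rintro ⟨h1, t, hRb, hnt⟩
          exact ⟨(key w).1 h1, t, (serialize_Rb_live hP hd).1 hRb, fun h => hnt ((key t).2 h)⟩
        · rintro ⟨h1, t, hRb, hnt⟩
          exact ⟨(key w).2 h1, t, (serialize_Rb_live hP hd).2 hRb, fun h => hnt ((key t).1 h)⟩
      · constructor
        · rintro ⟨h1, -⟩; exact absurd h1 (serialize_sat_ign_dead hd φ)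
        · rintro ⟨h1, -⟩; exact absurd h1 (sat_ign_dead hd φ)

end IRIK

namespace IRIK
open IRIForm

lemma sat_neg_iff {M : BiModel} {s : M.W} {φ : IRIForm} :
    Sat M s (neg φ) ↔ ¬ Sat M s φ := Iff.rfl
lemma sat_and_iff {M : BiModel} {s : M.W} {φ ψ : IRIForm} :
    Sat M s (and φ ψ) ↔ Sat M s φ ∧ Sat M s ψ := Iff.rfl
lemma sat_imp_iff {M : BiModel} {s : M.W} {φ ψ : IRIForm} :
    Sat M s (imp φ ψ) ↔ (Sat M s φ → Sat M s ψ) := by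
  rw [IRIForm.imp, sat_neg_iff, sat_and_iff, sat_neg_iff]; tauto
lemma sat_or_iff {M : BiModel} {s : M.W} {φ ψ : IRIForm} :
    Sat M s (or φ ψ) ↔ Sat M s φ ∨ Sat M s ψ := by
  rw [IRIForm.or, sat_neg_iff, sat_and_iff, sat_neg_iff, sat_neg_iff]; tauto
lemma sat_iff_iff {M : BiModel} {s : M.W} {φ ψ : IRIForm} :
    Sat M s (iff φ ψ) ↔ (Sat M s φ ↔ Sat M s ψ) := by
  rw [IRIForm.iff, sat_and_iff, sat_imp_iff, sat_imp_iff]; tauto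

lemma sat_bigAnd_iff {M : BiModel} {s : M.W} :
    ∀ (l : List IRIForm), Sat M s (bigAnd l) ↔ ∀ γ ∈ l, Sat M s γ
  | [] => by
      constructor
      · intro _; simp
      · intro _
        show ¬ (Sat M s (IRIForm.atom 0) ∧ ¬ Sat M s (IRIForm.atom 0))
        tauto
  | [a] => by simp [bigAnd]
  | a :: b :: t => by
      rw [show bigAnd (a :: b :: t) = and a (bigAnd (b :: t)) from rfl, sat_and_iff,
        sat_bigAnd_iff (b :: t)]
      constructor
      · rintro ⟨h1, h2⟩ γ hg
        rcases List.mem_cons.1 hg with rfl | hg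
        · exact h1
        · exact h2 γ hg
      · intro h
        exact ⟨h a (List.mem_cons_self), fun γ hg => h γ (List.mem_cons_of_mem _ hg)⟩

lemma sat_taut {M : BiModel} {s : M.W} {φ : IRIForm} (h : Taut φ) : Sat M s φ := by
  classical
  have hv := h (fun χ => decide (Sat M s χ)) ?_ ?_
  · exact of_decide_eq_true hv
  · intro ψ
    by_cases hψ : Sat M s ψ
    · simp only [decide_eq_true hψ, Bool.not_true, decide_eq_false_iff_not, sat_neg_iff]
      tauto
    · simp only [decide_eq_false hψ, Bool.not_false, decide_eq_true_eq, sat_neg_iff]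
      exact hψ
  · intro ψ χ
    show decide (Sat M s (IRIForm.and ψ χ)) = (decide (Sat M s ψ) && decide (Sat M s χ))
    by_cases h1 : Sat M s ψ <;> by_cases h2 : Sat M s χ <;>
      simp [sat_and_iff, h1, h2]

lemma sat_ign_neg_iff {M : BiModel} {s : M.W} {φ : IRIForm} :
    Sat M s (ign (neg φ)) ↔ Sat M s (ign φ) := by
  rw [sat_ign_iff, sat_ign_iff]
  constructor
  · rintro ⟨⟨t, ht, hst⟩, ⟨u, hu, hsu⟩⟩
    rw [sat_neg_iff] at hst hsu
    push_neg at hsu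
    exact ⟨⟨u, hu, hsu⟩, ⟨t, ht, hst⟩⟩
  · rintro ⟨⟨t, ht, hst⟩, ⟨u, hu, hsu⟩⟩
    exact ⟨⟨u, hu, hsu⟩, ⟨t, ht, fun h => h hst⟩⟩

theorem prov_sound {φ : IRIForm} (h : Prov φ) :
    ∀ M : BiModel, M.Proper → ∀ s : M.W, Sat M s φ := by
  induction h with
  | taut ht => exact fun M _ s => sat_taut ht
  | mp h1 h2 ih1 ih2 =>
      intro M hP s
      exact (sat_imp_iff.1 (ih1 M hP s)) (ih2 M hP s)
  | iEqu φ =>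
      intro M hP s
      rw [sat_iff_iff]
      exact sat_ign_neg_iff.symm
  | irEqu φ =>
      intro M hP s
      rw [sat_iff_iff, sat_rign_iff, sat_rign_iff]
      constructor
      · rintro ⟨h1, t, hRb, hnt⟩
        exact ⟨sat_ign_neg_iff.2 h1, t, hRb, fun hh => hnt (sat_ign_neg_iff.1 hh)⟩
      · rintro ⟨h1, t, hRb, hnt⟩
        exact ⟨sat_ign_neg_iff.1 h1, t, hRb, fun hh => hnt (sat_ign_neg_iff.2 hh)⟩
  | iCon φ ψ =>
      intro M hP s
      rw [sat_imp_iff, sat_or_iff, sat_ign_iff]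
      rintro ⟨⟨t, ht, hst⟩, ⟨u, hu, hsu⟩⟩
      rw [sat_and_iff] at hst
      rw [sat_and_iff] at hsu
      push_neg at hsu
      by_cases hφ : Sat M u φ
      · exact Or.inr (sat_ign_iff.2 ⟨⟨t, ht, hst.2⟩, ⟨u, hu, hsu hφ⟩⟩)
      · exact Or.inl (sat_ign_iff.2 ⟨⟨t, ht, hst.1⟩, ⟨u, hu, hφ⟩⟩)
  | iDis φ ψ χ =>
      intro M hP s
      rw [sat_imp_iff, sat_and_iff, sat_ign_iff, sat_ign_iff]
      rintro ⟨⟨-, ⟨u1, hu1, hsu1⟩⟩, ⟨-, ⟨u2, hu2, hsu2⟩⟩⟩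
      rw [sat_or_iff] at hsu1
      rw [sat_or_iff] at hsu2
      push_neg at hsu1 hsu2
      rw [sat_neg_iff] at hsu2
      push_neg at hsu2
      exact sat_ign_iff.2 ⟨⟨u2, hu2, hsu2.1⟩, ⟨u1, hu1, hsu1.1⟩⟩
  | riI φ =>
      intro M hP s
      rw [sat_imp_iff, sat_rign_iff]
      exact fun h => h.1
  | mix φ χ =>
      intro M hP s
      rw [sat_imp_iff, sat_and_iff, sat_rign_iff]
      rintro ⟨h1, h2⟩
      rw [sat_ign_iff] at h2
      obtain ⟨-, ⟨u, hu, hsu⟩⟩ := h2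
      rw [sat_or_iff] at hsu
      push_neg at hsu
      exact ⟨h1, u, hP s u hu, hsu.1⟩
  | rNI h ih =>
      intro M hP s
      rw [sat_neg_iff, sat_ign_iff]
      rintro ⟨-, ⟨u, hu, hsu⟩⟩
      exact hsu (ih M hP u)
  | reI h ih =>
      intro M hP s
      rw [sat_iff_iff, sat_ign_iff, sat_ign_iff]
      have key : ∀ w : M.W, Sat M w _ ↔ Sat M w _ := fun w => sat_iff_iff.1 (ih M hP w)
      constructor
      · rintro ⟨⟨t, ht, hst⟩, ⟨u, hu, hsu⟩⟩
        exact ⟨⟨t, ht, (key t).1 hst⟩, ⟨u, hu, fun hh => hsu ((key u).2 hh)⟩⟩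
      · rintro ⟨⟨t, ht, hst⟩, ⟨u, hu, hsu⟩⟩
        exact ⟨⟨t, ht, (key t).2 hst⟩, ⟨u, hu, fun hh => hsu ((key u).1 hh)⟩⟩
  | reRI h ih =>
      rename_i φ' ψ'
      intro M hP s
      have key : ∀ w : M.W, Sat M w φ' ↔ Sat M w ψ' := fun w => sat_iff_iff.1 (ih M hP w)
      have keyI : ∀ w : M.W, Sat M w (ign φ') ↔ Sat M w (ign ψ') := by
        intro w
        rw [sat_ign_iff, sat_ign_iff]
        constructor
        · rintro ⟨⟨t, ht, hst⟩, ⟨u, hu, hsu⟩⟩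
          exact ⟨⟨t, ht, (key t).1 hst⟩, ⟨u, hu, fun hh => hsu ((key u).2 hh)⟩⟩
        · rintro ⟨⟨t, ht, hst⟩, ⟨u, hu, hsu⟩⟩
          exact ⟨⟨t, ht, (key t).2 hst⟩, ⟨u, hu, fun hh => hsu ((key u).1 hh)⟩⟩
      rw [sat_iff_iff, sat_rign_iff, sat_rign_iff]
      constructor
      · rintro ⟨h1, t, hRb, hnt⟩
        exact ⟨(keyI s).1 h1, t, hRb, fun hh => hnt ((keyI t).2 hh)⟩
      · rintro ⟨h1, t, hRb, hnt⟩
        exact ⟨(keyI s).2 h1, t, hRb, fun hh => hnt ((keyI t).1 hh)⟩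
  | rMix h ih =>
      intro M hP s
      rename_i l φ
      rw [sat_imp_iff, sat_bigAnd_iff, sat_neg_iff, sat_rign_iff]
      intro hprem
      rintro ⟨hIφ, t, hRb, hnt⟩
      apply hnt
      have hall : ∀ χ ∈ l, Sat M t (ign χ) := by
        intro χ hχ
        have hc := hprem _ (List.mem_map_of_mem hχ)
        rw [sat_and_iff, sat_neg_iff, sat_rign_iff] at hc
        obtain ⟨hnr, hIχ⟩ := hc
        push_neg at hnr
        exact hnr hIχ t hRb
      have := ih M hP t
      rw [sat_imp_iff, sat_bigAnd_iff] at this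
      apply this
      intro γ hγ
      obtain ⟨χ, hχ, rfl⟩ := List.mem_map.1 hγ
      exact hall χ hχ

end IRIK

namespace IRIK
open IRIForm

lemma P_dblneg (φ : IRIForm) : Prov (imp (neg (neg φ)) φ) := by
  apply Prov.taut; intro v hn ha
  simp only [IRIForm.imp, hn, ha]
  cases hx : v φ <;> rfl

end IRIK



open IRIForm in
/-- IRIK is sound and strongly complete with respect to the class of serial proper
bi-models. -/
theorem irik_sound_complete_serial (Γ : Set IRIForm) (φ : IRIForm) :
    (∀ M : BiModel, M.Proper → SerialRel M.R → SerialRel M.Rb →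
      ∀ s, (∀ γ ∈ Γ, Sat M s γ) → Sat M s φ) ↔
    (∃ l : List IRIForm, (∀ γ ∈ l, γ ∈ Γ) ∧
      Prov (IRIForm.imp (IRIForm.bigAnd l) φ)) := by
  constructor
  · intro h
    by_contra hno
    push_neg at hno
    have hcons : IRIK.Consistent (insert (neg φ) Γ) := by
      intro l hl hp
      obtain ⟨l'', hsub, hmem⟩ := IRIK.exists_sublist l hl
      have h1 : Prov (imp (bigAnd l'') (neg (neg φ))) :=
        IRIK.imp_neg_of_incons hp (IRIK.imp_list_of_split hmem)
      exact hno l'' hsub (IRIK.P_imp_trans h1 (IRIK.P_dblneg φ))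
    obtain ⟨T, hT1, hT2⟩ := IRIK.lindenbaum hcons
    set s0 : IRIK.CWorld := ⟨T, hT2⟩
    have hΓ : ∀ γ ∈ Γ, Sat (IRIK.serialize IRIK.canonical) s0 γ := by
      intro γ hγ
      rw [IRIK.serialize_sat IRIK.canonical_proper γ s0]
      exact (IRIK.truth_lemma γ s0).1 (hT1 (Set.mem_insert_of_mem _ hγ))
    have hφ := h (IRIK.serialize IRIK.canonical) (IRIK.serialize_proper IRIK.canonical_proper)
      (IRIK.serialize_serialR _) (IRIK.serialize_serialRb _) s0 hΓ
    rw [IRIK.serialize_sat IRIK.canonical_proper φ s0] at hφ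
    have hmem : φ ∈ T := (IRIK.truth_lemma φ s0).2 hφ
    exact IRIK.mcs_not_both hT2 hmem (hT1 (Set.mem_insert _ _))
  · rintro ⟨l, hl, hp⟩ M hP _ _ s hΓ
    have h1 := IRIK.prov_sound hp M hP s
    rw [IRIK.sat_imp_iff] at h1
    apply h1
    rw [IRIK.sat_bigAnd_iff]
    exact fun γ hγ => hΓ γ (hl γ hγ)
end

section
/- The axiom (I-T) φ ∧ I(φ ∨ ψ) → Iφ is valid on the class of reflexive bi-models: for every bi-model (W,R,R∙) in which both R and R∙ are reflexive, all sets A, B : W → Prop, and every world s, if A s and (I (fun w => A w ∨ B w)) s, then (I A) s. -/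
/-- The axiom (I-T) φ ∧ I(φ ∨ ψ) → Iφ is valid on the class of reflexive bi-models. -/
theorem iT_valid_reflexive {W : Type} (R Rb : W → W → Prop)
    (hR : Reflexive R) (hRb : Reflexive Rb) (A B : W → Prop) (s : W)
    (hA : A s) (h : Ign R (fun w => A w ∨ B w) s) :
    Ign R A s := by
  obtain ⟨-, u, hu, hnu⟩ := h
  exact ⟨⟨s, hR s, hA⟩, u, hu, fun ha => hnu (Or.inl ha)⟩
end

section
/- For every IRI-formula φ, the formula Iφ ∧ IIφ → IRφ (first-order ignorance plus second-order ignorance implies Rumsfeld ignorance) is provable in the proof system IRIK. -/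
open IRIForm in
lemma taut_idem (a : IRIForm) : Taut (iff a (or a a)) := by
  intro v hn ha
  simp [IRIForm.iff, IRIForm.imp, IRIForm.or, hn, ha]

open IRIForm in
lemma taut_glue (a b c r : IRIForm) :
    Taut (imp (iff b c) (imp (imp (and a c) r) (imp (and a b) r))) := by
  intro v hn ha
  simp [IRIForm.iff, IRIForm.imp, hn, ha]
  cases v a <;> cases v b <;> cases v c <;> cases v r <;> simp

/-- First-order ignorance plus second-order ignorance implies Rumsfeld ignorance:
Iφ ∧ IIφ → IRφ is provable in IRIK. -/
theorem ign_and_second_order_imp_rumsfeld (φ : IRIForm) :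
    Prov (IRIForm.imp
      (IRIForm.and (IRIForm.ign φ) (IRIForm.ign (IRIForm.ign φ)))
      (IRIForm.rign φ)) := by
  have h1 : Prov (IRIForm.iff (IRIForm.ign (IRIForm.ign φ))
      (IRIForm.ign (IRIForm.or (IRIForm.ign φ) (IRIForm.ign φ)))) :=
    Prov.reI (Prov.taut (taut_idem (IRIForm.ign φ)))
  have h2 := Prov.mix φ (IRIForm.ign φ)
  exact Prov.mp (Prov.mp (Prov.taut (taut_glue (IRIForm.ign φ)
    (IRIForm.ign (IRIForm.ign φ))
    (IRIForm.ign (IRIForm.or (IRIForm.ign φ) (IRIForm.ign φ)))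
    (IRIForm.rign φ))) h1) h2
end

section
/- For every IRI-formula φ, the formula IIφ → IRφ (second-order ignorance implies Rumsfeld ignorance) is provable in the proof system obtained from IRIK by adding all instances of the axiom scheme (wI-4) IIφ → Iφ. -/
open IRIForm in
/-- The proof system IRIK + (wI-4) IIφ → Iφ. -/
inductive ProvW4 : IRIForm → Prop
  | taut {φ} : Taut φ → ProvW4 φ
  | mp {φ ψ} : ProvW4 (imp φ ψ) → ProvW4 φ → ProvW4 ψ
  | iEqu (φ) : ProvW4 (iff (ign φ) (ign (neg φ)))
  | irEqu (φ) : ProvW4 (iff (rign φ) (rign (neg φ)))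
  | iCon (φ ψ) : ProvW4 (imp (ign (and φ ψ)) (or (ign φ) (ign ψ)))
  | iDis (φ ψ χ) : ProvW4 (imp (and (ign (or φ ψ)) (ign (or (neg φ) χ))) (ign φ))
  | riI (φ) : ProvW4 (imp (rign φ) (ign φ))
  | mix (φ χ) : ProvW4 (imp (and (ign φ) (ign (or (ign φ) χ))) (rign φ))
  | rNI {φ} : ProvW4 φ → ProvW4 (neg (ign φ))
  | reI {φ ψ} : ProvW4 (iff φ ψ) → ProvW4 (iff (ign φ) (ign ψ))
  | reRI {φ ψ} : ProvW4 (iff φ ψ) → ProvW4 (iff (rign φ) (rign ψ))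
  | rMix {l : List IRIForm} {φ} :
      ProvW4 (imp (bigAnd (l.map ign)) (ign φ)) →
      ProvW4 (imp (bigAnd (l.map fun χ => and (neg (rign χ)) (ign χ))) (neg (rign φ)))
  | wI4 (φ) : ProvW4 (imp (ign (ign φ)) (ign φ))

/-- Second-order ignorance implies Rumsfeld ignorance: IIφ → IRφ is provable in
IRIK + wI-4. -/
theorem second_order_imp_rumsfeld (φ : IRIForm) :
    ProvW4 (IRIForm.imp (IRIForm.ign (IRIForm.ign φ)) (IRIForm.rign φ)) := by
  open IRIForm in
  have h1 : ProvW4 (imp (ign (ign φ)) (ign φ)) := ProvW4.wI4 φ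
  have heq : ProvW4 (iff (ign φ) (or (ign φ) (ign φ))) := by
    apply ProvW4.taut
    intro v hneg hand
    simp only [IRIForm.iff, IRIForm.imp, IRIForm.or, hneg, hand]
    cases v (ign φ) <;> simp
  have h2 := ProvW4.reI heq
  have h3 := ProvW4.mix φ (ign φ)
  have glue : ProvW4 (imp (imp (ign (ign φ)) (ign φ))
      (imp (iff (ign (ign φ)) (ign (or (ign φ) (ign φ))))
        (imp (imp (and (ign φ) (ign (or (ign φ) (ign φ)))) (rign φ))
          (imp (ign (ign φ)) (rign φ))))) := by
    apply ProvW4.taut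
    intro v hneg hand
    simp only [IRIForm.iff, IRIForm.imp, hneg, hand]
    cases v (ign (ign φ)) <;> cases v (ign φ) <;>
      cases v (ign (IRIForm.or (ign φ) (ign φ))) <;> cases v (rign φ) <;> simp
  exact ProvW4.mp (ProvW4.mp (ProvW4.mp glue h1) h2) h3
end

section
/- The scheme IRφ → IIφ is not valid over S4 proper bi-models: there exist a bi-model (W,R,R∙) in which both R and R∙ are reflexive and transitive and R ⊆ R∙, a set A : W → Prop, and a world s such that (IR A) s holds but (I (I A)) s fails. Consequently IRφ ↔ IIφ is not valid over S4 proper bi-models either. -/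
def Rr : Option ℕ → Option ℕ → Prop
  | some n, some m => n ≤ m
  | none, none => True
  | _, _ => False

def Rbb (x y : Option ℕ) : Prop := Rr x y ∨ y = none

lemma Rr_refl : Reflexive Rr := by
  intro x; cases x <;> simp [Rr]

lemma Rr_trans : Transitive Rr := by
  intro x y z hxy hyz
  cases x <;> cases y <;> cases z <;> simp_all [Rr]
  omega

def Aev (x : Option ℕ) : Prop := ∃ n, x = some (2 * n)

lemma ign_some (n : ℕ) : Ign Rr Aev (some n) := by
  constructor
  · exact ⟨some (2 * n), by simp [Rr]; omega, ⟨n, rfl⟩⟩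
  · refine ⟨some (2 * n + 1), by simp [Rr]; omega, ?_⟩
    rintro ⟨k, hk⟩
    simp only [Option.some.injEq] at hk
    omega

lemma not_ign_none : ¬ Ign Rr Aev none := by
  rintro ⟨⟨t, ht, k, hk⟩, -⟩
  cases t <;> simp_all [Rr]

/-- The scheme IRφ → IIφ is not valid over S4 proper bi-models (hence neither is
IRφ ↔ IIφ). -/
theorem rumsfeld_not_implies_second_order_S4 :
    ∃ (W : Type) (R Rb : W → W → Prop) (A : W → Prop) (s : W),
      Reflexive R ∧ Transitive R ∧ Reflexive Rb ∧ Transitive Rb ∧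
      (∀ s t, R s t → Rb s t) ∧
      RIgn R Rb A s ∧
      ¬ Ign R (Ign R A) s := by
  refine ⟨Option ℕ, Rr, Rbb, Aev, some 0, Rr_refl, Rr_trans, ?_, ?_, ?_, ?_, ?_⟩
  · intro x; exact Or.inl (Rr_refl x)
  · rintro x y z (hxy | rfl) (hyz | rfl)
    · exact Or.inl (Rr_trans hxy hyz)
    · exact Or.inr rfl
    · cases z with
      | none => exact Or.inr rfl
      | some m => exact absurd hyz (by simp [Rr])
    · exact Or.inr rfl
  · intro s t h; exact Or.inl h
  · exact ⟨ign_some 0, none, Or.inr rfl, not_ign_none⟩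
  · rintro ⟨-, u, hu, hnu⟩
    cases u with
    | none => exact hu.elim
    | some m => exact hnu (ign_some m)
end

section
/- One does not know that one is Rumsfeld ignorant: the scheme ¬□(IRφ) is valid over S4 proper bi-models, i.e. for every bi-model (W,R,R∙) in which both R and R∙ are reflexive and transitive and R ⊆ R∙, every set A : W → Prop, and every world s, it is not the case that (IR A) t holds for all t with R∙ s t. -/
/-- One does not know that one is Rumsfeld ignorant: ¬□(IRφ) is valid over S4 proper
bi-models. -/
theorem not_box_rumsfeld_S4 {W : Type} (R Rb : W → W → Prop)
    (hR : Reflexive R) (hRt : Transitive R) (hRb : Reflexive Rb) (hRbt : Transitive Rb)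
    (hsub : ∀ s t, R s t → Rb s t) (A : W → Prop) (s : W) :
    ¬ (∀ t, Rb s t → RIgn R Rb A t) := by
  intro h
  obtain ⟨_, t, hst, hnI⟩ := h s (hRb s)
  exact hnI (h t hst).1
end

section
/- One does not know that one is second-order ignorant: the scheme ¬□(IIφ) is valid over S4 proper bi-models, i.e. for every bi-model (W,R,R∙) in which both R and R∙ are reflexive and transitive and R ⊆ R∙, every set A : W → Prop, and every world s, it is not the case that (I (I A)) t holds for all t with R∙ s t. -/
/-- One does not know that one is second-order ignorant: ¬□(IIφ) is valid over S4 proper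
bi-models. -/
theorem not_box_second_order_S4 {W : Type} (R Rb : W → W → Prop)
    (hR : Reflexive R) (hRt : Transitive R) (hRb : Reflexive Rb) (hRbt : Transitive Rb)
    (hsub : ∀ s t, R s t → Rb s t) (A : W → Prop) (s : W) :
    ¬ (∀ t, Rb s t → Ign R (Ign R A) t) := by
  intro h
  obtain ⟨_, u, hsu, hnIAu⟩ := h s (hRb s)
  obtain ⟨⟨t, hut, ⟨a, hta, hAa⟩, b, htb, hnAb⟩, _⟩ := h u (hsub s u hsu)
  exact hnIAu ⟨⟨a, hRt hut hta, hAa⟩, ⟨b, hRt hut htb, hnAb⟩⟩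
end

section
/- All orders of ignorance beyond the second collapse: for all natural numbers m, n > 1, the scheme I^m φ ↔ I^n φ is valid over S4 proper bi-models, i.e. for every bi-model (W,R,R∙) in which both R and R∙ are reflexive and transitive and R ⊆ R∙, every set A : W → Prop, and every world s, the m-fold iterate I^[m] A holds at s if and only if the n-fold iterate I^[n] A holds at s. -/
private lemma ign_down {W : Type} {R : W → W → Prop} (hRt : Transitive R)
    (X : W → Prop) (s : W) : Ign R (Ign R X) s → Ign R X s := by
  rintro ⟨⟨t, hst, ⟨t1, ht1, h1⟩, ⟨t2, ht2, h2⟩⟩, -⟩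
  exact ⟨⟨t1, hRt hst ht1, h1⟩, ⟨t2, hRt hst ht2, h2⟩⟩

private lemma ign_up {W : Type} {R : W → W → Prop} (hR : Reflexive R) (hRt : Transitive R)
    (X : W → Prop) (s : W) : Ign R (Ign R X) s → Ign R (Ign R (Ign R X)) s := by
  rintro ⟨hpos, u, hsu, hnu⟩
  refine ⟨⟨s, hR s, hpos, u, hsu, hnu⟩, ⟨u, hsu, fun h => hnu (ign_down hRt X u h)⟩⟩

/-- All orders of ignorance beyond the second collapse: for m, n > 1, the scheme
I^m φ ↔ I^n φ is valid over S4 proper bi-models. -/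
theorem iterated_ignorance_collapse_S4 {W : Type} (R Rb : W → W → Prop)
    (hR : Reflexive R) (hRt : Transitive R) (hRb : Reflexive Rb) (hRbt : Transitive Rb)
    (hsub : ∀ s t, R s t → Rb s t) (A : W → Prop) (s : W)
    (m n : ℕ) (hm : 1 < m) (hn : 1 < n) :
    (Ign R)^[m] A s ↔ (Ign R)^[n] A s := by
  have key : ∀ k, (Ign R)^[k + 2] A s ↔ (Ign R)^[2] A s := by
    intro k
    induction k with
    | zero => rfl
    | succ k ih =>
      have e2 : (Ign R)^[k + 2] A = Ign R (Ign R ((Ign R)^[k] A)) := by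
        simp [Function.iterate_succ_apply']
      have e3 : (Ign R)^[k + 3] A = Ign R (Ign R (Ign R ((Ign R)^[k] A))) := by
        simp [Function.iterate_succ_apply']
      rw [← ih, show k + 1 + 2 = k + 3 from rfl, e2, e3]
      exact ⟨ign_down hRt _ s, ign_up hR hRt _ s⟩
  obtain ⟨m', rfl⟩ : ∃ m', m = m' + 2 := ⟨m - 2, by omega⟩
  obtain ⟨n', rfl⟩ : ∃ n', n = n' + 2 := ⟨n - 2, by omega⟩
  rw [key m', key n']
end

section
/- Let n > 0 be a natural number. Over S4 proper bi-models, i.e. for every bi-model (W,R,R∙) in which both R and R∙ are reflexive and transitive and R ⊆ R∙, for every family of sets A : Fin n → W → Prop and every world s, all four of the following hold: (1) it is not the case that (I (fun w => ∀ i, (I (A i)) w)) t holds for all t with R∙ s t; (2) it is not the case that (I (fun w => ∃ i, (I (A i)) w)) t holds for all t with R∙ s t; (3) it is not the case that (∀ i, (I (I (A i))) t) holds for all t with R∙ s t; (4) it is not the case that (∃ i, (I (I (A i))) t) holds for all t with R∙ s t. -/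
lemma notIgn_persist {W : Type} {R : W → W → Prop} (hRt : Transitive R) {B : W → Prop}
    {u v : W} (h : ¬ Ign R B u) (huv : R u v) : ¬ Ign R B v := by
  rintro ⟨⟨a, hva, ha⟩, ⟨b, hvb, hb⟩⟩
  exact h ⟨⟨a, hRt huv hva, ha⟩, ⟨b, hRt huv hvb, hb⟩⟩

/-- Over S4 proper bi-models, one does not know any of: the conjunction of ignorances
I(Iφ₁ ∧ ⋯ ∧ Iφₙ), the disjunction I(Iφ₁ ∨ ⋯ ∨ Iφₙ), the conjunction of second-order
ignorances IIφ₁ ∧ ⋯ ∧ IIφₙ, or their disjunction IIφ₁ ∨ ⋯ ∨ IIφₙ. -/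
theorem not_box_four_schemes_S4 (n : ℕ) (hn : 0 < n) {W : Type} (R Rb : W → W → Prop)
    (hR : Reflexive R) (hRt : Transitive R) (hRb : Reflexive Rb) (hRbt : Transitive Rb)
    (hsub : ∀ s t, R s t → Rb s t) (A : Fin n → W → Prop) (s : W) :
    (¬ ∀ t, Rb s t → Ign R (fun w => ∀ i, Ign R (A i) w) t) ∧
    (¬ ∀ t, Rb s t → Ign R (fun w => ∃ i, Ign R (A i) w) t) ∧
    (¬ ∀ t, Rb s t → ∀ i, Ign R (Ign R (A i)) t) ∧
    (¬ ∀ t, Rb s t → ∃ i, Ign R (Ign R (A i)) t) := by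
  refine ⟨?_, ?_, ?_, ?_⟩
  · intro h
    obtain ⟨-, u, hsu, hu⟩ := h s (hRb s)
    obtain ⟨i, hi⟩ := not_forall.mp hu
    obtain ⟨⟨v, huv, hv⟩, -⟩ := h u (hsub s u hsu)
    exact notIgn_persist hRt hi huv (hv i)
  · intro h
    obtain ⟨-, u, hsu, hu⟩ := h s (hRb s)
    obtain ⟨⟨v, huv, i, hv⟩, -⟩ := h u (hsub s u hsu)
    exact notIgn_persist hRt (fun hc => hu ⟨i, hc⟩) huv hv
  · intro h
    obtain ⟨-, u, hsu, hu⟩ := h s (hRb s) ⟨0, hn⟩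
    obtain ⟨⟨v, huv, hv⟩, -⟩ := h u (hsub s u hsu) ⟨0, hn⟩
    exact notIgn_persist hRt hu huv hv
  · intro h
    have key : ∀ k, k ≤ n → ∃ u, Rb s u ∧ ∃ S : Finset (Fin n),
        S.card = k ∧ ∀ i ∈ S, ¬ Ign R (A i) u := by
      intro k
      induction k with
      | zero => intro _; exact ⟨s, hRb s, ∅, rfl, by simp⟩
      | succ k ih =>
        intro hk
        obtain ⟨u, hsu, S, hcard, hS⟩ := ih (Nat.le_of_succ_le hk)
        obtain ⟨i, ⟨v, huv, hv⟩, w, huw, hw⟩ := h u hsu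
        by_cases hiS : i ∈ S
        · exact absurd hv (notIgn_persist hRt (hS i hiS) huv)
        · refine ⟨w, hRbt hsu (hsub u w huw), insert i S, ?_, ?_⟩
          · rw [Finset.card_insert_of_notMem hiS, hcard]
          · intro j hj
            rcases Finset.mem_insert.mp hj with rfl | hj
            · exact hw
            · exact notIgn_persist hRt (hS j hj) huw
    obtain ⟨u, hsu, S, hcard, hS⟩ := key n le_rfl
    have hSuniv : ∀ i, i ∈ S := by
      intro i
      have := Finset.eq_univ_of_card S (by simpa using hcard)
      simp [this]
    obtain ⟨i, ⟨v, huv, hv⟩, -⟩ := h u hsu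
    exact notIgn_persist hRt (hS i (hSuniv i)) huv hv
end
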